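/- Suppose the highest root θ is a fundamental weight and let α̂ be the unique simple root with (θ, α̂) ≠ 0. Then (θ, α̂∨) = 1, the coefficient of α̂ in θ equals 2, and for every positive root γ one has (γ, θ∨) = [γ : α̂]; moreover θ is the unique positive root with [γ : α̂] = 2. -/

import Mathlib

open scoped RealInnerProductSpace

/-- Data of a crystallographic root system in a real inner product space `V`,
with simple roots indexed by a finite type `ι`. -/
structure RSD (ι V : Type*) [Fintype ι] [NormedAddCommGroup V]
    [InnerProductSpace ℝ V] where
  /-- The simple roots. -/
  sroot : ι → V
  /-- The set of roots. -/
  Δ : Set V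
  finite : Δ.Finite
  zero_not_mem : (0 : V) ∉ Δ
  sroot_mem : ∀ i, sroot i ∈ Δ
  sroot_indep : LinearIndependent ℝ sroot
  neg_mem : ∀ a ∈ Δ, -a ∈ Δ
  /-- Crystallographic condition. -/
  crys : ∀ a ∈ Δ, ∀ b ∈ Δ, ∃ n : ℤ, 2 * ⟪a, b⟫ / ⟪a, a⟫ = (n : ℝ)
  /-- The reflection associated with a vector (only specified on roots). -/
  reflect : V → (V ≃ₗ[ℝ] V)
  reflect_apply : ∀ a ∈ Δ, ∀ v : V,
    reflect a v = v - (2 * ⟪a, v⟫ / ⟪a, a⟫) • a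
  reflect_root_mem : ∀ a ∈ Δ, ∀ b ∈ Δ, reflect a b ∈ Δ
  /-- Every root is a nonnegative or nonpositive integral combination of simple roots. -/
  decomp : ∀ a ∈ Δ, (∃ c : ι → ℕ, a = ∑ i, (c i : ℝ) • sroot i) ∨
      (∃ c : ι → ℕ, a = -∑ i, (c i : ℝ) • sroot i)
  /-- Irreducibility. -/
  irred : ∀ S T : Set V, S ∪ T = Δ → (∀ a ∈ S, ∀ b ∈ T, ⟪a, b⟫ = 0) →
      S = ∅ ∨ T = ∅

namespace RSD

variable {ι V : Type*} [Fintype ι] [NormedAddCommGroup V] [InnerProductSpace ℝ V]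
  (R : RSD ι V)

/-- The set of positive roots. -/
def pos : Set V := {a ∈ R.Δ | ∃ c : ι → ℕ, a = ∑ i, (c i : ℝ) • R.sroot i}

/-- `R.le μ γ` means `μ ≼ γ`, i.e. `γ - μ` is a nonnegative integral combination
of simple roots. -/
def le (μ γ : V) : Prop := ∃ c : ι → ℕ, γ - μ = ∑ i, (c i : ℝ) • R.sroot i

/-- The Weyl group, generated by the simple reflections. -/
def W : Subgroup (V ≃ₗ[ℝ] V) :=
  Subgroup.closure (Set.range fun i => R.reflect (R.sroot i))

/-- The inversion set `N(w) = {γ ∈ Δ⁺ ∣ w γ ∈ -Δ⁺}`. -/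
def N (w : V ≃ₗ[ℝ] V) : Set V := {γ ∈ R.pos | -(w γ) ∈ R.pos}

/-- The length of `w`: minimal length of an expression of `w` as a product of
simple reflections. -/
noncomputable def len (w : V ≃ₗ[ℝ] V) : ℕ :=
  sInf {n | ∃ l : List ι, l.length = n ∧
    (l.map fun i => R.reflect (R.sroot i)).prod = w}

/-- The coroot `a∨ = 2a/(a,a)`. -/
@[nolint unusedArguments]
noncomputable def coroot (_R : RSD ι V) (a : V) : V := (2 / ⟪a, a⟫) • a

/-- `ρ`, the half-sum of the positive roots. -/
noncomputable def rho : V :=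
  (2⁻¹ : ℝ) • ∑ a ∈ (R.finite.subset (fun a ha => ha.1 : R.pos ⊆ R.Δ)).toFinset, a

/-- `R.HtIs γ n` : the height of `γ` is `n`. -/
def HtIs (γ : V) (n : ℕ) : Prop :=
  ∃ c : ι → ℕ, γ = ∑ i, (c i : ℝ) • R.sroot i ∧ ∑ i, c i = n

/-- A long root: a root of maximal squared length. -/
def IsLong (γ : V) : Prop := γ ∈ R.Δ ∧ ∀ b ∈ R.Δ, ⟪b, b⟫ ≤ ⟪γ, γ⟫

/-- The highest root. -/
def IsHighest (θ : V) : Prop := θ ∈ R.pos ∧ ∀ γ ∈ R.pos, R.le γ θ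

/-- Simply-laced: all roots have the same length. -/
def SimplyLaced : Prop := ∀ a ∈ R.Δ, ∀ b ∈ R.Δ, ⟪a, a⟫ = ⟪b, b⟫

/-- A minimal inversion complete set. -/
def IsMICS (F : Set (V ≃ₗ[ℝ] V)) : Prop :=
  (∀ w ∈ F, w ∈ R.W) ∧ (⋃ w ∈ F, R.N w) = R.pos ∧
    ∀ F' ⊂ F, (⋃ w ∈ F', R.N w) ≠ R.pos

end RSD

/-!
A positive root `γ` with `(γ, θ∨) = 2` is sent by `s_θ` to `γ - 2θ`, so `2θ - γ` is a positive
root; maximality of `θ` then gives both `γ ≼ θ` and `θ ≼ γ`, whence `γ = θ`.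

When `θ` is orthogonal to every simple root but `α̂`, the pairing `(γ, θ∨)` is `[γ : α̂] · n` with
`n = (α̂, θ∨) ∈ ℤ`. Taking `γ = θ` gives `[θ : α̂] · n = 2`. If `n = 2`, the first observation
forces `α̂ = θ`, contradicting `(θ, α̂∨) = 1`; so `n = 1`, and all claims follow.
-/

namespace RSD

variable {ι V : Type*} [Fintype ι] [NormedAddCommGroup V] [InnerProductSpace ℝ V]
  (R : RSD ι V)

theorem ne_zero_of_mem {a : V} (ha : a ∈ R.Δ) : a ≠ 0 :=
  fun h => R.zero_not_mem (h ▸ ha)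

theorem sroot_mem_pos (i : ι) : R.sroot i ∈ R.pos := by
  classical
  exact ⟨R.sroot_mem i, Pi.single i 1, by simp [Pi.single_apply]⟩

theorem inner_coroot (v a : V) : ⟪v, R.coroot a⟫ = 2 * ⟪a, v⟫ / ⟪a, a⟫ := by
  rw [coroot, real_inner_smul_right, real_inner_comm a v]
  ring

theorem inner_coroot_self {a : V} (ha : a ≠ 0) : ⟪a, R.coroot a⟫ = 2 := by
  rw [inner_coroot, mul_div_assoc, div_self (inner_self_ne_zero.mpr ha), mul_one]

theorem inner_coroot_eq_zero_symm {a b : V} (hb : b ≠ 0) (h : ⟪a, R.coroot b⟫ = 0) :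
    ⟪b, R.coroot a⟫ = 0 := by
  rw [inner_coroot, div_eq_zero_iff, mul_eq_zero] at h
  rw [inner_coroot, real_inner_comm, h.resolve_right (inner_self_ne_zero.mpr hb) |>.resolve_left
    two_ne_zero, mul_zero, zero_div]

theorem exists_int_inner_coroot {a b : V} (ha : a ∈ R.Δ) (hb : b ∈ R.Δ) :
    ∃ n : ℤ, ⟪b, R.coroot a⟫ = n := by
  rw [inner_coroot]
  exact R.crys a ha b hb

theorem reflect_apply_eq_sub_inner_coroot {a : V} (ha : a ∈ R.Δ) (v : V) :
    R.reflect a v = v - ⟪v, R.coroot a⟫ • a := by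
  rw [R.reflect_apply a ha, inner_coroot]

theorem le_antisymm {a b : V} (hab : R.le a b) (hba : R.le b a) : a = b := by
  obtain ⟨c, hc⟩ := hab
  obtain ⟨d, hd⟩ := hba
  have hsum : ∑ i, ((c i + d i : ℕ) : ℝ) • R.sroot i = 0 := by
    simp only [Nat.cast_add, add_smul, Finset.sum_add_distrib, ← hc, ← hd, sub_add_sub_cancel,
      sub_self]
  have hc0 : ∀ i, (c i : ℝ) = 0 := fun i => by
    have := Fintype.linearIndependent_iff.mp R.sroot_indep _ hsum i
    norm_cast at this ⊢
    omega
  rw [← sub_eq_zero, ← neg_sub, hc]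
  simp [hc0]

theorem inner_coroot_eq_coeff_mul {θ : V} {i : ι}
    (horth : ∀ j, j ≠ i → ⟪θ, R.coroot (R.sroot j)⟫ = 0) (c : ι → ℝ) :
    ⟪∑ k, c k • R.sroot k, R.coroot θ⟫ = c i * ⟪R.sroot i, R.coroot θ⟫ := by
  have horth' (j : ι) (hj : j ≠ i) : ⟪R.sroot j, R.coroot θ⟫ = 0 :=
    R.inner_coroot_eq_zero_symm (R.ne_zero_of_mem (R.sroot_mem j)) (horth j hj)
  rw [sum_inner, Finset.sum_eq_single i (fun j _ hj => by rw [real_inner_smul_left, horth' j hj,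
    mul_zero]) (by simp), real_inner_smul_left]

variable {R} in
theorem IsHighest.eq_of_inner_coroot_eq_two {θ γ : V} (hθ : R.IsHighest θ) (hγ : γ ∈ R.pos)
    (h : ⟪γ, R.coroot θ⟫ = 2) : γ = θ := by
  obtain ⟨⟨hθΔ, c, hc⟩, hmax⟩ := hθ
  obtain ⟨d, hd⟩ := hmax γ hγ
  have hmem : (2 : ℝ) • θ - γ ∈ R.Δ := by
    have := R.neg_mem _ (R.reflect_root_mem θ hθΔ γ hγ.1)
    rwa [R.reflect_apply_eq_sub_inner_coroot hθΔ, h, neg_sub] at this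
  have hdecomp : (2 : ℝ) • θ - γ = ∑ k, ((c k + d k : ℕ) : ℝ) • R.sroot k := by
    rw [show (2 : ℝ) • θ - γ = θ + (θ - γ) by module, hd, hc]
    simp only [Nat.cast_add, add_smul, Finset.sum_add_distrib]
  obtain ⟨e, he⟩ := hmax _ ⟨hmem, _, hdecomp⟩
  refine R.le_antisymm ⟨d, hd⟩ ⟨e, ?_⟩
  rw [← he]
  module

end RSD

/-- If the highest root `θ` is a fundamental weight with `α̂ = sroot ih`
the unique simple root not orthogonal to `θ`, then `(θ, α̂∨) = 1`, `[θ:α̂] = 2`,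
`(γ, θ∨) = [γ:α̂]` for every positive root `γ`, and `θ` is the unique positive root
with `α̂`-coefficient `2`. -/
theorem highest_root_fundamental_weight_props
    {ι V : Type*} [Fintype ι] [NormedAddCommGroup V] [InnerProductSpace ℝ V]
    (R : RSD ι V) (θ : V) (hθ : R.IsHighest θ) (ih : ι)
    (hfund1 : ⟪θ, R.coroot (R.sroot ih)⟫ = 1)
    (hfund0 : ∀ j : ι, j ≠ ih → ⟪θ, R.coroot (R.sroot j)⟫ = 0) :
    ⟪θ, R.coroot (R.sroot ih)⟫ = 1 ∧
      (∀ c : ι → ℕ, θ = ∑ k, (c k : ℝ) • R.sroot k → c ih = 2) ∧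
      (∀ γ ∈ R.pos, ∀ c : ι → ℕ, γ = ∑ k, (c k : ℝ) • R.sroot k →
        ⟪γ, R.coroot θ⟫ = (c ih : ℝ)) ∧
      (∀ γ ∈ R.pos, ∀ c : ι → ℕ, γ = ∑ k, (c k : ℝ) • R.sroot k → c ih = 2 → γ = θ) := by
  have hθ0 : θ ≠ 0 := R.ne_zero_of_mem hθ.1.1
  have hpair (γ : V) (c : ι → ℕ) (hγ : γ = ∑ k, (c k : ℝ) • R.sroot k) :
      ⟪γ, R.coroot θ⟫ = c ih * ⟪R.sroot ih, R.coroot θ⟫ := by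
    rw [hγ, R.inner_coroot_eq_coeff_mul hfund0]
  obtain ⟨n, hn⟩ := R.exists_int_inner_coroot hθ.1.1 (R.sroot_mem ih)
  obtain ⟨c₀, hc₀⟩ := hθ.1.2
  have hc₀n : (c₀ ih : ℤ) * n = 2 := by
    have := R.inner_coroot_self hθ0
    rw [hpair θ c₀ hc₀, hn] at this
    exact_mod_cast this
  have hn2 : n ≠ 2 := by
    intro h
    have hαθ := hθ.eq_of_inner_coroot_eq_two (R.sroot_mem_pos ih) (by rw [hn, h]; norm_num)
    rw [← hαθ, R.inner_coroot_self (R.ne_zero_of_mem (R.sroot_mem ih))] at hfund1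
    norm_num at hfund1
  have hn1 : n = 1 := by
    have : 0 < n := by nlinarith
    have : n ≤ 2 := Int.le_of_dvd two_pos ⟨c₀ ih, by rw [← hc₀n, mul_comm]⟩
    omega
  have hcoeff (γ : V) (c : ι → ℕ) (hγ : γ = ∑ k, (c k : ℝ) • R.sroot k) :
      ⟪γ, R.coroot θ⟫ = c ih := by
    rw [hpair γ c hγ, hn, hn1, Int.cast_one, mul_one]
  refine ⟨hfund1, fun c hc => ?_, fun γ _ c hc => hcoeff γ c hc, fun γ hγ c hc h2 => ?_⟩
  · have := hcoeff θ c hc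
    rw [R.inner_coroot_self hθ0] at this
    exact_mod_cast this.symm
  · exact hθ.eq_of_inner_coroot_eq_two hγ (by rw [hcoeff γ c hc, h2]; norm_num)
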